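/- Let M be a 2×2 real white Wishart matrix M = X Xᵀ with X a 2×N matrix of i.i.d. N(0,1) entries, N ≥ 2. Then the probability that both eigenvalues of M lie in [a,b] ⊂ [0,∞) equals K' √(det A), where A is the 2×2 skew-symmetric matrix with a_{1,2} = [P(α₂, b/2) + P(α₂, a/2)]·P(α₁; a/2, b/2) − (2/Γ(α₁)) ∫_{a/2}^{b/2} x^{α} e^{−x} P(α₂, x) dx, with α = (N−3)/2, α_ℓ = α + ℓ, and K' = K · 2^{2α+3} Γ(α+1) Γ(α+2), K being the Wishart eigenvalue-density normalizing constant for n=2. -/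

import Mathlib

open MeasureTheory Real

/-- The regularized lower incomplete gamma function
`P(a,x) = (1/Γ(a)) ∫₀ˣ t^(a-1) e^(-t) dt`; `P(a;x,y) = P(a,y) − P(a,x)`. -/
noncomputable def regP (a x : ℝ) : ℝ :=
  (1 / Real.Gamma a) * ∫ t in (0:ℝ)..x, t ^ (a - 1) * Real.exp (-t)

/-- `Γ₂(a) = √π Γ(a) Γ(a−1/2)`. -/
noncomputable def Gamma2 (a : ℝ) : ℝ := Real.sqrt Real.pi * Real.Gamma a * Real.Gamma (a - 1 / 2)

lemma intInt_pow_exp {α : ℝ} (hα : -1 < α) (a b : ℝ) :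
    IntervalIntegrable (fun t => t ^ α * Real.exp (-t)) volume a b :=
  (intervalIntegral.intervalIntegrable_rpow' hα).mul_continuousOn
    (Continuous.continuousOn (by continuity))

lemma regP_eq {s : ℝ} (hs : 0 < s) (x : ℝ) :
    regP s x = (1 / Real.Gamma s) * ∫ t in (0:ℝ)..x, t ^ (s-1) * Real.exp (-t) := rfl

lemma Gamma_regP_eq {s : ℝ} (hs : 0 < s) (x : ℝ) :
    Real.Gamma s * regP s x = ∫ t in (0:ℝ)..x, t ^ (s-1) * Real.exp (-t) := by
  rw [regP]; field_simp [Real.Gamma_pos_of_pos hs |>.ne']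

lemma integral_pow_exp {α : ℝ} (hα : -1 < α) (c d : ℝ) :
    ∫ t in c..d, t ^ α * Real.exp (-t)
      = Real.Gamma (α+1) * (regP (α+1) d - regP (α+1) c) := by
  have h1 := Gamma_regP_eq (s := α+1) (by linarith) d
  have h2 := Gamma_regP_eq (s := α+1) (by linarith) c
  have h3 : α + 1 - 1 = α := by ring
  rw [mul_sub, h1, h2, h3]
  exact (intervalIntegral.integral_interval_sub_left
    (by simpa using intInt_pow_exp hα 0 d) (by simpa using intInt_pow_exp hα 0 c)).symm

lemma regP_continuous {s : ℝ} (hs : 0 < s) : Continuous (regP s) := by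
  have : Continuous fun x => ∫ t in (0:ℝ)..x, t ^ (s-1) * Real.exp (-t) :=
    intervalIntegral.continuous_primitive (fun a b => intInt_pow_exp (by linarith) a b) 0
  exact continuous_const.mul this

lemma regP_hasDerivAt {s x : ℝ} (hs : 0 < s) (hx : 0 < x) :
    HasDerivAt (regP s) ((1 / Real.Gamma s) * (x ^ (s-1) * Real.exp (-x))) x := by
  have hcont : ∀ y ∈ Set.Ioi (0:ℝ), ContinuousAt (fun t : ℝ => t ^ (s-1) * Real.exp (-t)) y := by
    intro y hy
    exact (Real.continuousAt_rpow_const y _ (Or.inl (ne_of_gt hy))).mul (by fun_prop)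
  have h : HasDerivAt (fun u => ∫ t in (0:ℝ)..u, t ^ (s-1) * Real.exp (-t))
      (x ^ (s-1) * Real.exp (-x)) x :=
    intervalIntegral.integral_hasDerivAt_right (intInt_pow_exp (by linarith) 0 x)
      (ContinuousAt.stronglyMeasurableAtFilter isOpen_Ioi hcont x hx) (hcont x hx)
  exact h.const_mul _

lemma parts {α A B : ℝ} (hα : -1 < α) (hA : 0 ≤ A) (hAB : A ≤ B) :
    ∫ u in A..B,
        ((1 / Real.Gamma (α+1) * (u ^ α * Real.exp (-u))) * regP (α+2) u
          + regP (α+1) u * (1 / Real.Gamma (α+2) * (u ^ (α+1) * Real.exp (-u))))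
      = regP (α+1) B * regP (α+2) B - regP (α+1) A * regP (α+2) A := by
  have h1 : (0:ℝ) < α + 1 := by linarith
  have h2 : (0:ℝ) < α + 2 := by linarith
  refine intervalIntegral.integral_eq_sub_of_hasDeriv_right_of_le hAB
    (((regP_continuous h1).mul (regP_continuous h2)).continuousOn) (fun x hx => ?_) ?_
  · have hx0 : 0 < x := lt_of_le_of_lt hA hx.1
    have d1 := regP_hasDerivAt h1 hx0
    have d2 := regP_hasDerivAt h2 hx0
    rw [show α + 1 - 1 = α by ring] at d1
    rw [show α + 2 - 1 = α + 1 by ring] at d2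
    exact (d1.mul d2).hasDerivWithinAt
  · apply IntervalIntegrable.add
    · exact ((intInt_pow_exp hα A B).const_mul _).mul_continuousOn
        (regP_continuous h2).continuousOn
    · exact (((intInt_pow_exp (by linarith : (-1:ℝ) < α+1) A B).const_mul _)).continuousOn_mul
        (regP_continuous h1).continuousOn

lemma rpow_succ_nonneg {u : ℝ} (hu : 0 ≤ u) (α : ℝ) (hα : -1 < α) :
    u ^ (α + 1) = u ^ α * u := by
  rcases eq_or_lt_of_le hu with h | h
  · rw [← h, Real.zero_rpow (by linarith), mul_zero]
  · rw [Real.rpow_add_one h.ne']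

lemma key {α A B : ℝ} (hα : -1 < α) (hA : 0 ≤ A) (hAB : A ≤ B) :
    ∫ u in A..B, u ^ α * Real.exp (-u) *
        (u * (Real.Gamma (α+1) * (regP (α+1) u - regP (α+1) A))
          - Real.Gamma (α+2) * (regP (α+2) u - regP (α+2) A))
      = Real.Gamma (α+1) * Real.Gamma (α+2) *
        ((regP (α+2) B + regP (α+2) A) * (regP (α+1) B - regP (α+1) A)
          - (2 / Real.Gamma (α+1)) * ∫ u in A..B, u ^ α * Real.exp (-u) * regP (α+2) u) := by
  have h1 : (0:ℝ) < α + 1 := by linarith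
  have h2 : (0:ℝ) < α + 2 := by linarith
  have hα1 : (-1:ℝ) < α + 1 := by linarith
  have hG1 : Real.Gamma (α+1) ≠ 0 := (Real.Gamma_pos_of_pos h1).ne'
  have hG2 : Real.Gamma (α+2) ≠ 0 := (Real.Gamma_pos_of_pos h2).ne'
  set Γ1 := Real.Gamma (α+1)
  set Γ2 := Real.Gamma (α+2)
  set c1 := regP (α+1) A
  set c2 := regP (α+2) A
  have hI1 : IntervalIntegrable (fun u => u ^ (α+1) * Real.exp (-u) * regP (α+1) u)
      volume A B :=
    (intInt_pow_exp hα1 A B).mul_continuousOn (regP_continuous h1).continuousOn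
  have hI0 : IntervalIntegrable (fun u => u ^ α * Real.exp (-u) * regP (α+2) u) volume A B :=
    (intInt_pow_exp hα A B).mul_continuousOn (regP_continuous h2).continuousOn
  have hJ1 : IntervalIntegrable (fun u => u ^ (α+1) * Real.exp (-u)) volume A B :=
    intInt_pow_exp hα1 A B
  have hJ0 : IntervalIntegrable (fun u => u ^ α * Real.exp (-u)) volume A B :=
    intInt_pow_exp hα A B
  -- split the LHS
  have hsplit : (∫ u in A..B, u ^ α * Real.exp (-u) *
        (u * (Γ1 * (regP (α+1) u - c1)) - Γ2 * (regP (α+2) u - c2)))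
      = Γ1 * (∫ u in A..B, u ^ (α+1) * Real.exp (-u) * regP (α+1) u)
        - (Γ1 * c1) * (∫ u in A..B, u ^ (α+1) * Real.exp (-u))
        - Γ2 * (∫ u in A..B, u ^ α * Real.exp (-u) * regP (α+2) u)
        + (Γ2 * c2) * (∫ u in A..B, u ^ α * Real.exp (-u)) := by
    rw [intervalIntegral.integral_congr
      (g := fun u => Γ1 * (u ^ (α+1) * Real.exp (-u) * regP (α+1) u)
        - (Γ1 * c1) * (u ^ (α+1) * Real.exp (-u))
        - Γ2 * (u ^ α * Real.exp (-u) * regP (α+2) u)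
        + (Γ2 * c2) * (u ^ α * Real.exp (-u)))
      (fun u hu => ?_)]
    · rw [intervalIntegral.integral_add (((hI1.const_mul _).sub (hJ1.const_mul _)).sub
          (hI0.const_mul _)) (hJ0.const_mul _),
        intervalIntegral.integral_sub ((hI1.const_mul _).sub (hJ1.const_mul _))
          (hI0.const_mul _),
        intervalIntegral.integral_sub (hI1.const_mul _) (hJ1.const_mul _),
        intervalIntegral.integral_const_mul, intervalIntegral.integral_const_mul,
        intervalIntegral.integral_const_mul, intervalIntegral.integral_const_mul]
    · rw [Set.uIcc_of_le hAB] at hu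
      have hu0 : (0:ℝ) ≤ u := le_trans hA hu.1
      simp only [rpow_succ_nonneg hu0 α hα]
      ring
  rw [hsplit]
  -- evaluate the pure integrals
  have hJ0' : (∫ u in A..B, u ^ α * Real.exp (-u)) = Γ1 * (regP (α+1) B - c1) :=
    integral_pow_exp hα A B
  have hJ1' : (∫ u in A..B, u ^ (α+1) * Real.exp (-u)) = Γ2 * (regP (α+2) B - c2) := by
    have := integral_pow_exp hα1 A B
    rw [show α + 1 + 1 = α + 2 by ring] at this
    exact this
  -- integration by parts
  have hparts := parts hα hA hAB
  rw [intervalIntegral.integral_congr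
      (g := fun u => (1 / Γ1) * (u ^ α * Real.exp (-u) * regP (α+2) u)
        + (1 / Γ2) * (u ^ (α+1) * Real.exp (-u) * regP (α+1) u))
      (fun u _ => by ring),
    intervalIntegral.integral_add (hI0.const_mul _) (hI1.const_mul _),
    intervalIntegral.integral_const_mul, intervalIntegral.integral_const_mul] at hparts
  set I0 := ∫ u in A..B, u ^ α * Real.exp (-u) * regP (α+2) u
  set I1 := ∫ u in A..B, u ^ (α+1) * Real.exp (-u) * regP (α+1) u
  have hparts' : Γ2 * I0 + Γ1 * I1
      = Γ1 * Γ2 * (regP (α+1) B * regP (α+2) B - c1 * c2) := by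
    calc Γ2 * I0 + Γ1 * I1 = Γ1 * Γ2 * ((1/Γ1) * I0 + (1/Γ2) * I1) := by
          field_simp
      _ = _ := by rw [hparts]
  have hred : Γ1 * Γ2 * (2 / Γ1) = 2 * Γ2 := by field_simp
  rw [hJ0', hJ1']
  linear_combination hparts' + I0 * hred

lemma intInt_exp_pow {α : ℝ} (hα : -1 < α) (a b : ℝ) :
    IntervalIntegrable (fun t => Real.exp (-t/2) * t ^ α) volume a b :=
  (intervalIntegral.intervalIntegrable_rpow' hα).continuousOn_mul
    (Continuous.continuousOn (by fun_prop))

lemma half_integral {β : ℝ} (hβ : -1 < β) {c d : ℝ} (hc : 0 ≤ c) (hcd : c ≤ d) :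
    ∫ y in c..d, Real.exp (-y/2) * y ^ β
      = 2 ^ (β+1) * (Real.Gamma (β+1) * (regP (β+1) (d/2) - regP (β+1) (c/2))) := by
  have h2 : (∫ y in c..d, Real.exp (-y/2) * y ^ β)
      = 2 * ∫ t in (c/2)..(d/2), Real.exp (-(2*t)/2) * (2*t) ^ β := by
    rw [intervalIntegral.integral_comp_mul_left
      (fun y => Real.exp (-y/2) * y ^ β) (two_ne_zero)]
    rw [show (2:ℝ)*(c/2) = c by ring, show (2:ℝ)*(d/2) = d by ring]
    simp [smul_eq_mul]
  have hcongr : Set.EqOn (fun t => Real.exp (-(2*t)/2) * (2*t) ^ β)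
      (fun t => (2:ℝ) ^ β * (t ^ β * Real.exp (-t))) (Set.uIcc (c/2) (d/2)) := by
    intro t ht
    rw [Set.uIcc_of_le (by linarith)] at ht
    have ht0 : 0 ≤ t := le_trans (by linarith) ht.1
    simp only
    rw [Real.mul_rpow (by norm_num) ht0, show -(2*t)/2 = -t by ring]
    ring
  rw [h2, intervalIntegral.integral_congr hcongr, intervalIntegral.integral_const_mul,
    integral_pow_exp hβ, show β + 1 = β + 1 from rfl, Real.rpow_add_one two_ne_zero β]
  ring

lemma inner_eval {α a x : ℝ} (hα : -1 < α) (ha : 0 ≤ a) (hx : a ≤ x) :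
    ∫ y in a..x, Real.exp (-(x + y)/2) * (x*y) ^ α * (x - y)
      = Real.exp (-x/2) * x ^ α *
        (x * (2 ^ (α+1) * (Real.Gamma (α+1) * (regP (α+1) (x/2) - regP (α+1) (a/2))))
          - 2 ^ (α+2) * (Real.Gamma (α+2) * (regP (α+2) (x/2) - regP (α+2) (a/2)))) := by
  have hx0 : 0 ≤ x := le_trans ha hx
  have hα1 : (-1:ℝ) < α + 1 := by linarith
  have congr1 : Set.EqOn (fun y => Real.exp (-(x + y)/2) * (x*y) ^ α * (x - y))
      (fun y => (Real.exp (-x/2) * x ^ α) *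
        (x * (Real.exp (-y/2) * y ^ α) - Real.exp (-y/2) * y ^ (α+1))) (Set.uIcc a x) := by
    intro y hy
    rw [Set.uIcc_of_le hx] at hy
    have hy0 : 0 ≤ y := le_trans ha hy.1
    simp only
    rw [Real.mul_rpow hx0 hy0, show -(x+y)/2 = -x/2 + -y/2 by ring, Real.exp_add,
      rpow_succ_nonneg hy0 α hα]
    ring
  rw [intervalIntegral.integral_congr congr1, intervalIntegral.integral_const_mul,
    intervalIntegral.integral_sub ((intInt_exp_pow hα a x).const_mul x)
      (intInt_exp_pow hα1 a x),
    intervalIntegral.integral_const_mul, half_integral hα ha hx]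
  have h2 := half_integral hα1 (c := a) (d := x) ha hx
  rw [show α + 1 + 1 = α + 2 by ring] at h2
  rw [h2]

lemma outer_eval {α a b : ℝ} (hα : -1 < α) (ha : 0 ≤ a) (hab : a ≤ b) :
    (∫ x in a..b, Real.exp (-x/2) * x ^ α *
        (x * (2 ^ (α+1) * (Real.Gamma (α+1) * (regP (α+1) (x/2) - regP (α+1) (a/2))))
          - 2 ^ (α+2) * (Real.Gamma (α+2) * (regP (α+2) (x/2) - regP (α+2) (a/2)))))
      = 2 ^ (2*α+3) * (Real.Gamma (α+1) * Real.Gamma (α+2) *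
          ((regP (α+2) (b/2) + regP (α+2) (a/2)) * (regP (α+1) (b/2) - regP (α+1) (a/2))
            - (2 / Real.Gamma (α+1)) *
              ∫ u in (a/2)..(b/2), u ^ α * Real.exp (-u) * regP (α+2) u)) := by
  set F := fun x => Real.exp (-x/2) * x ^ α *
        (x * (2 ^ (α+1) * (Real.Gamma (α+1) * (regP (α+1) (x/2) - regP (α+1) (a/2))))
          - 2 ^ (α+2) * (Real.Gamma (α+2) * (regP (α+2) (x/2) - regP (α+2) (a/2)))) with hF
  have h2 : (∫ x in a..b, F x) = 2 * ∫ u in (a/2)..(b/2), F (2*u) := by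
    rw [intervalIntegral.integral_comp_mul_left F (two_ne_zero)]
    rw [show (2:ℝ)*(a/2) = a by ring, show (2:ℝ)*(b/2) = b by ring]
    simp [smul_eq_mul]
  have hcongr : Set.EqOn (fun u => F (2*u))
      (fun u => ((2:ℝ) ^ α * 2 ^ (α+2)) * (u ^ α * Real.exp (-u) *
        (u * (Real.Gamma (α+1) * (regP (α+1) u - regP (α+1) (a/2)))
          - Real.Gamma (α+2) * (regP (α+2) u - regP (α+2) (a/2)))))
      (Set.uIcc (a/2) (b/2)) := by
    intro u hu
    rw [Set.uIcc_of_le (by linarith)] at hu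
    have hu0 : 0 ≤ u := le_trans (by linarith) hu.1
    simp only [hF]
    rw [Real.mul_rpow (by norm_num) hu0, show (2:ℝ)*u/2 = u by ring,
      show -(2*u)/2 = -u by ring,
      show α + 2 = α + 1 + 1 by ring, Real.rpow_add_one two_ne_zero (α+1)]
    ring
  rw [h2, intervalIntegral.integral_congr hcongr, intervalIntegral.integral_const_mul,
    key hα (by linarith : (0:ℝ) ≤ a/2) (by linarith : a/2 ≤ b/2)]
  have hpow : (2:ℝ) ^ (2*α+3) = 2 * ((2:ℝ) ^ α * 2 ^ (α+2)) := by
    rw [show (2:ℝ)*α+3 = 1 + (α + (α+2)) by ring, Real.rpow_add two_pos,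
      Real.rpow_add two_pos, Real.rpow_one]
  rw [hpow]; ring

lemma triangle_integral {a b : ℝ} (hab : a ≤ b) (g : ℝ → ℝ → ℝ)
    (hint : IntegrableOn (fun p : ℝ × ℝ => g p.1 p.2)
      {p : ℝ × ℝ | a ≤ p.2 ∧ p.2 ≤ p.1 ∧ p.1 ≤ b}) :
    (∫ p in {p : ℝ × ℝ | a ≤ p.2 ∧ p.2 ≤ p.1 ∧ p.1 ≤ b}, g p.1 p.2)
      = ∫ x in a..b, ∫ y in a..x, g x y := by
  set S : Set (ℝ × ℝ) := {p : ℝ × ℝ | a ≤ p.2 ∧ p.2 ≤ p.1 ∧ p.1 ≤ b} with hSdef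
  have hS : MeasurableSet S := by
    have : S = {p : ℝ × ℝ | a ≤ p.2} ∩ ({p : ℝ × ℝ | p.2 ≤ p.1} ∩ {p : ℝ × ℝ | p.1 ≤ b}) := rfl
    rw [this]
    exact (measurableSet_le measurable_const measurable_snd).inter
      ((measurableSet_le measurable_snd measurable_fst).inter
        (measurableSet_le measurable_fst measurable_const))
  have hInd : Integrable (S.indicator (fun p : ℝ × ℝ => g p.1 p.2)) (volume.prod volume) := by
    rw [← MeasureTheory.Measure.volume_eq_prod]
    exact (integrable_indicator_iff hS).2 hint
  have key : ∀ x : ℝ, (∫ y, S.indicator (fun p : ℝ × ℝ => g p.1 p.2) (x, y))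
      = (Set.Icc a b).indicator (fun x => ∫ y in a..x, g x y) x := by
    intro x
    by_cases hx : x ∈ Set.Icc a b
    · rw [Set.indicator_of_mem hx]
      have hfun : (fun y => S.indicator (fun p : ℝ × ℝ => g p.1 p.2) (x, y))
          = (Set.Icc a x).indicator (fun y => g x y) := by
        funext y
        by_cases hy : y ∈ Set.Icc a x
        · rw [Set.indicator_of_mem hy,
            Set.indicator_of_mem (show (x, y) ∈ S from ⟨hy.1, hy.2, hx.2⟩)]
        · rw [Set.indicator_of_notMem hy, Set.indicator_of_notMem
            (fun hmem => hy ⟨hmem.1, hmem.2.1⟩)]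
      rw [hfun, MeasureTheory.integral_indicator measurableSet_Icc,
        MeasureTheory.integral_Icc_eq_integral_Ioc, ← intervalIntegral.integral_of_le hx.1]
    · rw [Set.indicator_of_notMem hx]
      have hfun : (fun y => S.indicator (fun p : ℝ × ℝ => g p.1 p.2) (x, y))
          = fun _ => (0:ℝ) := by
        funext y
        exact Set.indicator_of_notMem
          (fun hmem => hx ⟨le_trans hmem.1 hmem.2.1, hmem.2.2⟩) _
      rw [hfun, MeasureTheory.integral_zero]
  calc (∫ p in S, g p.1 p.2)
      = ∫ p : ℝ × ℝ, S.indicator (fun p : ℝ × ℝ => g p.1 p.2) p := by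
        rw [MeasureTheory.integral_indicator hS]
    _ = ∫ p : ℝ × ℝ, S.indicator (fun p : ℝ × ℝ => g p.1 p.2) p ∂(volume.prod volume) := by
        rw [← MeasureTheory.Measure.volume_eq_prod]
    _ = ∫ x, ∫ y, S.indicator (fun p : ℝ × ℝ => g p.1 p.2) (x, y) :=
        MeasureTheory.integral_prod _ hInd
    _ = ∫ x, (Set.Icc a b).indicator (fun x => ∫ y in a..x, g x y) x :=
        MeasureTheory.integral_congr_ae (Filter.Eventually.of_forall key)
    _ = ∫ x in Set.Icc a b, ∫ y in a..x, g x y :=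
        MeasureTheory.integral_indicator measurableSet_Icc
    _ = ∫ x in a..b, ∫ y in a..x, g x y := by
        rw [intervalIntegral.integral_of_le hab, MeasureTheory.integral_Icc_eq_integral_Ioc]


/-- For a 2×2 real white Wishart matrix `M ~ W₂(N, I)` (`N ≥ 2`), with ordered
eigenvalue density `K e^(−(x₁+x₂)/2)(x₁x₂)^α (x₁−x₂)` on `x₁ ≥ x₂ ≥ 0`,
`α = (N−3)/2`, `K = π²/(2^N Γ₂(N/2) Γ₂(1))`, the probability that both eigenvalues
lie in `[a,b] ⊂ [0,∞)` equals `K' √(det A) = K' a₁₂`, where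
`K' = K · 2^(2α+3) Γ(α+1) Γ(α+2)` and
`a₁₂ = [P(α₂,b/2)+P(α₂,a/2)]·[P(α₁,b/2)−P(α₁,a/2)] − (2/Γ(α₁)) ∫_{a/2}^{b/2} x^α e^(−x) P(α₂,x) dx`. -/
theorem wishart_two_psi (N : ℕ) (hN : 2 ≤ N) (a b : ℝ) (ha : 0 ≤ a) (hab : a ≤ b) :
    (∫ p in {p : ℝ × ℝ | a ≤ p.2 ∧ p.2 ≤ p.1 ∧ p.1 ≤ b},
        Real.pi ^ 2 / (2 ^ N * Gamma2 ((N : ℝ) / 2) * Gamma2 1) *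
          (Real.exp (-(p.1 + p.2) / 2) * (p.1 * p.2) ^ (((N : ℝ) - 3) / 2) * (p.1 - p.2))) =
      (Real.pi ^ 2 / (2 ^ N * Gamma2 ((N : ℝ) / 2) * Gamma2 1) *
          (2 : ℝ) ^ (2 * (((N : ℝ) - 3) / 2) + 3) *
          Real.Gamma (((N : ℝ) - 3) / 2 + 1) * Real.Gamma (((N : ℝ) - 3) / 2 + 2)) *
        ((regP (((N : ℝ) - 3) / 2 + 2) (b / 2) + regP (((N : ℝ) - 3) / 2 + 2) (a / 2)) *
            (regP (((N : ℝ) - 3) / 2 + 1) (b / 2) - regP (((N : ℝ) - 3) / 2 + 1) (a / 2)) -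
          (2 / Real.Gamma (((N : ℝ) - 3) / 2 + 1)) *
            ∫ x in (a / 2)..(b / 2),
              x ^ (((N : ℝ) - 3) / 2) * Real.exp (-x) * regP (((N : ℝ) - 3) / 2 + 2) x) := by
  set α : ℝ := ((N : ℝ) - 3) / 2 with hαdef
  have hN2 : (2:ℝ) ≤ (N:ℝ) := by exact_mod_cast hN
  have hα : -1 < α := by rw [hαdef]; linarith
  set K : ℝ := Real.pi ^ 2 / (2 ^ N * Gamma2 ((N : ℝ) / 2) * Gamma2 1) with hK
  have hb0 : (0:ℝ) ≤ b := le_trans ha hab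
  -- integrability on the triangle
  have hIntS : IntegrableOn
      (fun p : ℝ × ℝ => Real.exp (-(p.1 + p.2) / 2) * (p.1 * p.2) ^ α * (p.1 - p.2))
      {p : ℝ × ℝ | a ≤ p.2 ∧ p.2 ≤ p.1 ∧ p.1 ≤ b} := by
    have hsub : {p : ℝ × ℝ | a ≤ p.2 ∧ p.2 ≤ p.1 ∧ p.1 ≤ b}
        ⊆ Set.Icc 0 b ×ˢ Set.Icc 0 b := by
      rintro ⟨x, y⟩ ⟨h1, h2, h3⟩
      exact ⟨⟨le_trans ha (le_trans h1 h2), h3⟩, le_trans ha h1, le_trans h2 h3⟩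
    have hx_int : IntegrableOn (fun x : ℝ => x ^ α) (Set.Icc 0 b) volume :=
      (intervalIntegrable_iff_integrableOn_Icc_of_le hb0).1
        (intervalIntegral.intervalIntegrable_rpow' hα)
    have hdom : IntegrableOn (fun p : ℝ × ℝ => (b * p.1 ^ α) * p.2 ^ α)
        (Set.Icc 0 b ×ˢ Set.Icc 0 b) volume := by
      rw [IntegrableOn, MeasureTheory.Measure.volume_eq_prod,
        ← MeasureTheory.Measure.prod_restrict]
      exact MeasureTheory.Integrable.mul_prod (hx_int.const_mul b) hx_int
    refine MeasureTheory.IntegrableOn.mono_set ?_ hsub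
    refine MeasureTheory.Integrable.mono hdom ?_ ?_
    · exact (Measurable.aestronglyMeasurable (by fun_prop)).restrict
    · rw [MeasureTheory.ae_restrict_iff' (measurableSet_Icc.prod measurableSet_Icc)]
      refine Filter.Eventually.of_forall ?_
      rintro ⟨x, y⟩ ⟨⟨hx0, hxb⟩, hy0, hyb⟩
      simp only [Real.norm_eq_abs]
      rw [show |Real.exp (-(x + y) / 2) * (x * y) ^ α * (x - y)|
          = Real.exp (-(x + y) / 2) * (x ^ α * y ^ α) * |x - y| by
        rw [abs_mul, abs_mul,
          abs_of_nonneg (Real.rpow_nonneg (mul_nonneg hx0 hy0) _),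
          Real.mul_rpow hx0 hy0, abs_of_pos (Real.exp_pos _)]]
      have h1 : Real.exp (-(x + y) / 2) ≤ 1 := Real.exp_le_one_iff.mpr (by linarith)
      have h2 : |x - y| ≤ b := abs_le.mpr ⟨by linarith, by linarith⟩
      calc Real.exp (-(x + y) / 2) * (x ^ α * y ^ α) * |x - y|
          ≤ 1 * (x ^ α * y ^ α) * b := by gcongr
        _ = b * x ^ α * y ^ α := by ring
        _ = |b * x ^ α * y ^ α| := (abs_of_nonneg (by positivity)).symm
    -- done
  rw [MeasureTheory.integral_const_mul]
  rw [triangle_integral hab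
    (fun x y => Real.exp (-(x + y) / 2) * (x * y) ^ α * (x - y)) hIntS]
  have hcongr : Set.EqOn
      (fun x => ∫ y in a..x, Real.exp (-(x + y) / 2) * (x * y) ^ α * (x - y))
      (fun x => Real.exp (-x/2) * x ^ α *
        (x * (2 ^ (α+1) * (Real.Gamma (α+1) * (regP (α+1) (x/2) - regP (α+1) (a/2))))
          - 2 ^ (α+2) * (Real.Gamma (α+2) * (regP (α+2) (x/2) - regP (α+2) (a/2)))))
      (Set.uIcc a b) := by
    intro x hx
    rw [Set.uIcc_of_le hab] at hx
    exact inner_eval hα ha hx.1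
  rw [intervalIntegral.integral_congr hcongr, outer_eval hα ha hab]
  ring
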